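/- For all real numbers a, b with 0 < a ≤ b and every integer n ≥ 1, one has |Σ_{k=1}^n log(1 + b/k) − Σ_{k=1}^n log(1 + a/k)| ≤ (1 + log n)·(b − a). In other words, for the weights w_k(λ) = 1 + λ/k, the map λ ↦ Σ_{k=1}^n log(w_k(λ)) is (1 + log n)-Lipschitz on (0,∞). -/

import Mathlib

/-!
Since `log` is increasing and `1`-Lipschitz on `[1, ∞)`, each summand `log (1 + λ / k)` is
increasing and `(1 / k)`-Lipschitz in `λ ≥ 0`. Summing, the difference is nonnegative and at most
`(b - a)` times the harmonic number `H_n ≤ 1 + log n`.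
-/

open Finset Real

theorem log_sub_log_le_sub_of_one_le {x y : ℝ} (hx : 1 ≤ x) (hxy : x ≤ y) :
    log y - log x ≤ y - x := by
  have hx₀ : 0 < x := one_pos.trans_le hx
  have hy₀ : 0 < y := hx₀.trans_le hxy
  calc log y - log x = log (y / x) := (log_div hy₀.ne' hx₀.ne').symm
    _ ≤ y / x - 1 := log_le_sub_one_of_pos (div_pos hy₀ hx₀)
    _ = (y - x) / x := by field_simp
    _ ≤ y - x := div_le_self (sub_nonneg.2 hxy) hx

theorem log_one_add_div_sub_log_one_add_div_le {a b k : ℝ} (ha : 0 ≤ a) (hab : a ≤ b)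
    (hk : 0 < k) : log (1 + b / k) - log (1 + a / k) ≤ (b - a) * k⁻¹ := by
  calc log (1 + b / k) - log (1 + a / k) ≤ (1 + b / k) - (1 + a / k) :=
        log_sub_log_le_sub_of_one_le (le_add_of_nonneg_right (by positivity)) (by gcongr)
    _ = (b - a) * k⁻¹ := by ring

theorem sum_Icc_inv_le_one_add_log (n : ℕ) :
    ∑ k ∈ Icc 1 n, (k : ℝ)⁻¹ ≤ 1 + log n := by
  simpa [harmonic_eq_sum_Icc] using harmonic_le_one_add_log n

theorem stmt_16_general (a b : ℝ) (ha : 0 < a) (hab : a ≤ b) (n : ℕ) :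
    |(∑ k ∈ Finset.Icc 1 n, Real.log (1 + b / (k : ℝ))) -
        ∑ k ∈ Finset.Icc 1 n, Real.log (1 + a / (k : ℝ))| ≤
      (1 + Real.log n) * (b - a) := by
  have hk : ∀ k ∈ Icc 1 n, (0 : ℝ) < k := fun k hk ↦ by
    exact_mod_cast (mem_Icc.1 hk).1
  have hterm_nonneg : ∀ k ∈ Icc 1 n, 0 ≤ log (1 + b / (k : ℝ)) - log (1 + a / k) :=
    fun k hk' ↦ have := hk k hk'; sub_nonneg.2 (log_le_log (by positivity) (by gcongr))
  rw [← sum_sub_distrib, abs_of_nonneg (sum_nonneg hterm_nonneg)]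
  calc ∑ k ∈ Icc 1 n, (log (1 + b / (k : ℝ)) - log (1 + a / k))
      ≤ ∑ k ∈ Icc 1 n, (b - a) * (k : ℝ)⁻¹ := sum_le_sum fun k hk' ↦
        log_one_add_div_sub_log_one_add_div_le ha.le hab (hk k hk')
    _ = (b - a) * ∑ k ∈ Icc 1 n, (k : ℝ)⁻¹ := (mul_sum ..).symm
    _ ≤ (b - a) * (1 + log n) :=
        mul_le_mul_of_nonneg_left (sum_Icc_inv_le_one_add_log n) (sub_nonneg.2 hab)
    _ = (1 + log n) * (b - a) := mul_comm ..

/-- For the weights `w k (λ) = 1 + λ / k`, the map `λ ↦ ∑_{k=1}^n log (w k (λ))` is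
`(1 + log n)`-Lipschitz on `(0, ∞)`. -/
theorem stmt_16 (a b : ℝ) (ha : 0 < a) (hab : a ≤ b) (n : ℕ) (hn : 1 ≤ n) :
    |(∑ k ∈ Finset.Icc 1 n, Real.log (1 + b / (k : ℝ))) -
        ∑ k ∈ Finset.Icc 1 n, Real.log (1 + a / (k : ℝ))| ≤
      (1 + Real.log n) * (b - a) :=
  stmt_16_general a b ha hab n
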